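/- arXiv:1001.1384 — 11 statements merged into one kernel-verified Lean document; each statement's English description precedes it below -/
import Mathlib

section
/- For an n×n positive semidefinite matrix L, a Hermitian matrix A, and real-valued functions f, g defined on the spectrum of A, we have Tr[f(A) L g(A) L] ≤ (1/2) Tr[(f(A)L)² + (g(A)L)²]. -/
/-!
With `X = f(A) - g(A)`, the difference of the two sides is `½ Tr[(X L)²] = ½ Tr[(X L X) L]`.
Since `X` is Hermitian, `X L X = Xᴴ L X` is positive semidefinite, and the trace of a product
of two positive semidefinite matrices is nonnegative (write `L = Cᴴ C` and cycle the trace).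
-/

open scoped ComplexOrder

namespace Matrix

variable {n 𝕜 : Type*} [Fintype n] [RCLike 𝕜]

theorem PosSemidef.trace_mul_nonneg {A B : Matrix n n 𝕜} (hA : A.PosSemidef)
    (hB : B.PosSemidef) : 0 ≤ (A * B).trace := by
  classical
  open scoped MatrixOrder Matrix.Norms.L2Operator in
  obtain ⟨C, rfl⟩ := CStarAlgebra.nonneg_iff_eq_star_mul_self.mp hB.nonneg
  rw [star_eq_conjTranspose, ← mul_assoc, trace_mul_comm]
  simpa only [mul_assoc] using (hA.mul_mul_conjTranspose_same C).trace_nonneg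

theorem IsHermitian.trace_mul_mul_mul_self_nonneg {X L : Matrix n n 𝕜} (hX : X.IsHermitian)
    (hL : L.PosSemidef) : 0 ≤ (X * L * X * L).trace := by
  have hXLX : (X * L * X).PosSemidef := by
    simpa only [hX.eq] using hL.conjTranspose_mul_mul_same X
  exact hXLX.trace_mul_nonneg hL

theorem IsHermitian.trace_mul_mul_mul_le [DecidableEq n] {F G L : Matrix n n 𝕜}
    (hF : F.IsHermitian) (hG : G.IsHermitian) (hL : L.PosSemidef) :
    (F * L * G * L).trace ≤ (1 / 2 : 𝕜) * ((F * L) ^ 2 + (G * L) ^ 2).trace := by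
  have hcycle : (G * L * F * L).trace = (F * L * G * L).trace := by
    simpa only [mul_assoc] using trace_mul_comm (G * L) (F * L)
  have hexpand : ((F - G) * L * (F - G) * L).trace =
      ((F * L) ^ 2 + (G * L) ^ 2).trace - 2 * (F * L * G * L).trace := by
    have hsq : (F - G) * L * (F - G) * L =
        ((F * L) ^ 2 + (G * L) ^ 2) - (F * L * G * L + G * L * F * L) := by
      noncomm_ring
    rw [hsq, trace_sub, trace_add (F * L * G * L), hcycle, two_mul]
  have htwice : 2 * (F * L * G * L).trace ≤ ((F * L) ^ 2 + (G * L) ^ 2).trace :=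
    sub_nonneg.mp (hexpand ▸ (hF.sub hG).trace_mul_mul_mul_self_nonneg hL)
  calc (F * L * G * L).trace = (1 / 2 : 𝕜) * (2 * (F * L * G * L).trace) := by ring
    _ ≤ (1 / 2 : 𝕜) * ((F * L) ^ 2 + (G * L) ^ 2).trace := by gcongr

end Matrix

open Matrix ComplexOrder in
theorem trace_fALgAL_le_half_trace_sq {n : ℕ} (L A : Matrix (Fin n) (Fin n) ℂ)
    (hL : L.PosSemidef) (hA : A.IsHermitian) (f g : ℝ → ℝ) :
    trace (hA.cfc f * L * hA.cfc g * L) ≤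
      (1 / 2 : ℂ) * trace ((hA.cfc f * L) ^ 2 + (hA.cfc g * L) ^ 2) := by
  have hcfc (h : ℝ → ℝ) : (hA.cfc h).IsHermitian := by
    rw [← hA.cfc_eq]
    exact cfc_predicate h A
  exact (hcfc f).trace_mul_mul_mul_le (hcfc g) hL
end

section
/- For Hermitian n×n matrices L and A and real-valued functions f, g on the spectrum of A, we have Tr[f(A) L g(A) L] ≤ (1/2) Tr[f(A)² L² + g(A)² L²]. -/
/-!
With `F = f(A)`, `G = g(A)` and `L` Hermitian, the matrix `B = F L - L G` has
`Tr (B Bᴴ) = Tr (F² L²) + Tr (G² L²) - 2 Tr (F L G L)` by cyclicity of the trace, and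
`Tr (B Bᴴ) ≥ 0`.
-/

namespace Matrix

variable {n R : Type*} [Fintype n] [DecidableEq n] [CommRing R] [StarRing R]

lemma trace_sub_mul_conjTranspose_sub {F G L : Matrix n n R}
    (hF : F.IsHermitian) (hG : G.IsHermitian) (hL : L.IsHermitian) :
    trace ((F * L - L * G) * (F * L - L * G)ᴴ) =
      trace (F ^ 2 * L ^ 2) + trace (G ^ 2 * L ^ 2) - 2 * trace (F * L * G * L) := by
  have hFF : trace (F * L * (L * F)) = trace (F ^ 2 * L ^ 2) := by
    rw [← Matrix.mul_assoc, trace_mul_comm, pow_two, pow_two]; simp only [Matrix.mul_assoc]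
  have hGG : trace (L * G * (G * L)) = trace (G ^ 2 * L ^ 2) := by
    rw [Matrix.mul_assoc, trace_mul_comm, pow_two, pow_two]; simp only [Matrix.mul_assoc]
  have hLG : trace (L * G * (L * F)) = trace (F * L * G * L) := by
    rw [← Matrix.mul_assoc, trace_mul_comm]; simp only [Matrix.mul_assoc]
  have hFG : trace (F * L * (G * L)) = trace (F * L * G * L) := by
    simp only [Matrix.mul_assoc]
  rw [conjTranspose_sub, conjTranspose_mul, conjTranspose_mul, hF.eq, hG.eq, hL.eq, sub_mul,
    mul_sub, mul_sub, trace_sub, trace_sub, trace_sub, hFF, hGG, hLG, hFG]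
  ring

lemma two_mul_trace_mul_mul_mul_le [PartialOrder R] [StarOrderedRing R] {F G L : Matrix n n R}
    (hF : F.IsHermitian) (hG : G.IsHermitian) (hL : L.IsHermitian) :
    2 * trace (F * L * G * L) ≤ trace (F ^ 2 * L ^ 2 + G ^ 2 * L ^ 2) := by
  have h := (posSemidef_self_mul_conjTranspose (F * L - L * G)).trace_nonneg
  rw [trace_sub_mul_conjTranspose_sub hF hG hL, sub_nonneg] at h
  rwa [trace_add]

end Matrix

open Matrix ComplexOrder in
theorem trace_fALgAL_le_half_trace_sq_sq {n : ℕ} (L A : Matrix (Fin n) (Fin n) ℂ)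
    (hL : L.IsHermitian) (hA : A.IsHermitian) (f g : ℝ → ℝ) :
    trace (hA.cfc f * L * hA.cfc g * L) ≤
      (1 / 2 : ℂ) * trace (hA.cfc f ^ 2 * L ^ 2 + hA.cfc g ^ 2 * L ^ 2) := by
  have hF : (hA.cfc f).IsHermitian := hA.cfc_eq f ▸ cfc_predicate f A
  have hG : (hA.cfc g).IsHermitian := hA.cfc_eq g ▸ cfc_predicate g A
  have h := two_mul_trace_mul_mul_mul_le hF hG hL
  rw [← sub_nonneg] at h ⊢
  calc (0 : ℂ) ≤ 1 / 2 * _ := mul_nonneg (by norm_num [Complex.le_def]) h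
    _ = _ := by ring
end

section
/- For Hermitian n×n matrices X and Y, Tr[XYXY] ≤ Tr[X²Y²]. -/
open Matrix ComplexOrder in
theorem trace_XYXY_le_trace_X2Y2 {n : ℕ} (X Y : Matrix (Fin n) (Fin n) ℂ)
    (hX : X.IsHermitian) (hY : Y.IsHermitian) :
    trace (X * Y * X * Y) ≤ trace (X ^ 2 * Y ^ 2) := by
  set B := X * Y - Y * X with hB
  have h : 0 ≤ trace (Bᴴ * B) := by
    rw [trace]
    apply Finset.sum_nonneg
    intro i _
    simp only [diag_apply, mul_apply, conjTranspose_apply]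
    exact Finset.sum_nonneg fun j _ => star_mul_self_nonneg _
  have hC : Bᴴ = Y * X - X * Y := by
    simp [hB, conjTranspose_sub, conjTranspose_mul, hX.eq, hY.eq]
  rw [hC] at h
  have e1 : trace (Y * (X * (X * Y))) = trace (X * (X * (Y * Y))) := by
    rw [trace_mul_comm Y (X * (X * Y))]; simp [Matrix.mul_assoc]
  have e2 : trace (Y * (X * (Y * X))) = trace (X * (Y * (X * Y))) := by
    rw [trace_mul_comm Y (X * (Y * X))]; simp [Matrix.mul_assoc]
  have e3 : trace (X * (Y * (Y * X))) = trace (X * (X * (Y * Y))) := by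
    rw [trace_mul_comm X (Y * (Y * X))]
    rw [show Y * (Y * X) * X = Y * (Y * (X * X)) from by simp [Matrix.mul_assoc]]
    rw [trace_mul_comm Y (Y * (X * X))]
    rw [show Y * (X * X) * Y = Y * (X * (X * Y)) from by simp [Matrix.mul_assoc]]
    exact e1
  have key : trace ((Y * X - X * Y) * B)
      = 2 * trace (X ^ 2 * Y ^ 2) - 2 * trace (X * Y * X * Y) := by
    simp only [hB, Matrix.sub_mul, Matrix.mul_sub, trace_sub, pow_two,
      Matrix.mul_assoc]
    rw [e1, e2, e3]; ring
  rw [key] at h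
  rw [Complex.le_def] at h ⊢
  set a := trace (X ^ 2 * Y ^ 2)
  set b := trace (X * Y * X * Y)
  obtain ⟨h1, h2⟩ := h
  simp only [Complex.mul_re, Complex.mul_im, Complex.sub_re, Complex.sub_im,
    Complex.zero_re, Complex.zero_im, Complex.re_ofNat, Complex.im_ofNat] at h1 h2
  constructor <;> [linarith; linarith]
end

section
/- Let L and A be Hermitian n×n matrices and f, g real-valued functions on a set D containing the spectrum of A. If f(x) ≤ g(x) for all x ∈ D (or f(x) ≥ g(x) for all x ∈ D), then Tr[f(A) L g(A) L] ≤ (1/2) Tr[(f(A)L)² + (g(A)L)²]. -/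
/-!
Since `f - g` has constant sign on the spectrum of `A`, the matrix `f(A) - g(A) = (f - g)(A)` is
`±P` with `P` positive semidefinite. Writing `P = B⋆B`, cyclicity of the trace gives
`Tr[(PL)²] = Tr[(BLB⋆)⋆(BLB⋆)] ≥ 0`, and expanding `Tr[((f(A) - g(A))L)²] ≥ 0` is the claim.
-/

namespace Matrix

open scoped ComplexOrder MatrixOrder

variable {n 𝕜 : Type*} [Fintype n] [DecidableEq n] [RCLike 𝕜]

theorem PosSemidef.trace_mul_sq_nonneg {P L : Matrix n n 𝕜} (hP : P.PosSemidef)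
    (hL : L.IsHermitian) : 0 ≤ trace ((P * L) ^ 2) := by
  obtain ⟨B, rfl⟩ := CStarAlgebra.nonneg_iff_eq_star_mul_self.mp hP.nonneg
  have hBLB : (B * L * Bᴴ)ᴴ = B * L * Bᴴ := by
    simp only [conjTranspose_mul, conjTranspose_conjTranspose, hL.eq, mul_assoc]
  calc 0 ≤ trace ((B * L * Bᴴ)ᴴ * (B * L * Bᴴ)) :=
        (posSemidef_conjTranspose_mul_self _).trace_nonneg
    _ = trace ((B * L * Bᴴ * B * L) * Bᴴ) := by rw [hBLB]; simp only [mul_assoc]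
    _ = trace (Bᴴ * (B * L * Bᴴ * B * L)) := trace_mul_comm _ _
    _ = trace ((star B * B * L) ^ 2) := by rw [sq, star_eq_conjTranspose]; simp only [mul_assoc]

theorem IsHermitian.posSemidef_cfc_sub_cfc {A : Matrix n n 𝕜} (hA : A.IsHermitian)
    {f g : ℝ → ℝ} (hfg : ∀ i, g (hA.eigenvalues i) ≤ f (hA.eigenvalues i)) :
    (hA.cfc f - hA.cfc g).PosSemidef := by
  have hcont (h : ℝ → ℝ) : ContinuousOn h (spectrum ℝ A) := A.finite_real_spectrum.continuousOn h
  rw [← hA.cfc_eq, ← hA.cfc_eq, ← cfc_sub f g A (hcont f) (hcont g), ← nonneg_iff_posSemidef]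
  refine cfc_nonneg fun x hx => ?_
  obtain ⟨i, rfl⟩ := hA.spectrum_real_eq_range_eigenvalues ▸ hx
  exact sub_nonneg.mpr (hfg i)

theorem trace_sub_mul_sq {R : Type*} [CommRing R] (F G L : Matrix n n R) :
    trace (((F - G) * L) ^ 2) =
      trace ((F * L) ^ 2 + (G * L) ^ 2) - 2 * trace (F * L * G * L) := by
  have hcycle : trace (G * L * F * L) = trace (F * L * G * L) := by
    simpa only [mul_assoc] using trace_mul_comm (G * L) (F * L)
  simp only [sub_mul, mul_sub, sq, trace_sub, trace_add, ← mul_assoc]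
  rw [hcycle]
  ring

end Matrix

open Matrix ComplexOrder in
theorem trace_fALgAL_le_of_le_or_ge {n : ℕ} (L A : Matrix (Fin n) (Fin n) ℂ)
    (hL : L.IsHermitian) (hA : A.IsHermitian) (D : Set ℝ) (f g : ℝ → ℝ)
    (hspec : ∀ i, hA.eigenvalues i ∈ D)
    (hfg : (∀ x ∈ D, f x ≤ g x) ∨ (∀ x ∈ D, g x ≤ f x)) :
    trace (hA.cfc f * L * hA.cfc g * L) ≤
      (1 / 2 : ℂ) * trace ((hA.cfc f * L) ^ 2 + (hA.cfc g * L) ^ 2) := by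
  have hsq : 0 ≤ trace (((hA.cfc f - hA.cfc g) * L) ^ 2) := by
    rcases hfg with hle | hge
    · rw [← neg_sub, neg_mul, neg_sq]
      exact (hA.posSemidef_cfc_sub_cfc fun i => hle _ (hspec i)).trace_mul_sq_nonneg hL
    · exact (hA.posSemidef_cfc_sub_cfc fun i => hge _ (hspec i)).trace_mul_sq_nonneg hL
  rw [trace_sub_mul_sq] at hsq
  rw [← sub_nonneg]
  convert mul_nonneg (by positivity : (0 : ℂ) ≤ 1 / 2) hsq using 1
  ring
end

section
/- For α ∈ [0,1], a positive semidefinite n×n matrix T, and a Hermitian n×n matrix A, Tr[(T^{1/2} A)²] ≤ Tr[T^α A T^{1-α} A] ≤ Tr[T A²]. -/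
/-!
Write `T = U diag(λ) U*` with `U` unitary and `λᵢ ≥ 0`. All three traces take the form
`∑ᵢⱼ F(λᵢ, λⱼ) |Bᵢⱼ|²` where `B = U* A U`; since `B` is Hermitian, the weights `|Bᵢⱼ|²` are
symmetric in `i, j`, so only the symmetrizations `F(x, y) + F(y, x)` of the kernels need comparing.
Pointwise, `2 √x √y ≤ x^α y^(1-α) + x^(1-α) y^α ≤ x + y`: the first inequality is AM-GM for two
numbers whose product is `x y`, the second is the weighted AM-GM inequality applied twice.
-/

open Matrix

theorem Finset.sum_sum_mul_le_of_add_swap_le {ι R : Type*} [Fintype ι] [CommRing R]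
    [LinearOrder R] [IsStrictOrderedRing R] {F G c : ι → ι → R} (hc : ∀ i j, 0 ≤ c i j)
    (hc_symm : ∀ i j, c i j = c j i) (hFG : ∀ i j, F i j + F j i ≤ G i j + G j i) :
    ∑ i, ∑ j, F i j * c i j ≤ ∑ i, ∑ j, G i j * c i j := by
  have two_mul_eq (H : ι → ι → R) :
      2 * ∑ i, ∑ j, H i j * c i j = ∑ i, ∑ j, (H i j + H j i) * c i j := by
    have swap : ∑ i, ∑ j, H j i * c i j = ∑ i, ∑ j, H i j * c i j := by
      rw [Finset.sum_comm]
      simp only [hc_symm]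
    simp only [add_mul, Finset.sum_add_distrib, swap, two_mul]
  refine le_of_mul_le_mul_left ?_ two_pos
  rw [two_mul_eq, two_mul_eq]
  exact Finset.sum_le_sum fun i _ => Finset.sum_le_sum fun j _ =>
    mul_le_mul_of_nonneg_right (hFG i j) (hc i j)

namespace Real

variable {x y α : ℝ}

theorem two_mul_rpow_inv_two_mul_rpow_inv_two_le (hx : 0 ≤ x) (hy : 0 ≤ y) :
    2 * (x ^ (2⁻¹ : ℝ) * y ^ (2⁻¹ : ℝ)) ≤ x ^ α * y ^ (1 - α) + x ^ (1 - α) * y ^ α := by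
  have hp : 0 ≤ x ^ α * y ^ (1 - α) := by positivity
  have hq : 0 ≤ x ^ (1 - α) * y ^ α := by positivity
  have hpq : x ^ α * y ^ (1 - α) * (x ^ (1 - α) * y ^ α) = x * y := by
    rw [mul_mul_mul_comm, ← rpow_add' hx (by norm_num), mul_comm (y ^ _),
      ← rpow_add' hy (by norm_num)]
    norm_num
  have amgm := geom_mean_le_arith_mean2_weighted (w₁ := 2⁻¹) (w₂ := 2⁻¹) (by norm_num)
    (by norm_num) hp hq (by norm_num)
  rw [← mul_rpow hp hq, hpq, mul_rpow hx hy] at amgm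
  linarith

theorem rpow_mul_rpow_add_rpow_mul_rpow_le_add (hx : 0 ≤ x) (hy : 0 ≤ y) (h0 : 0 ≤ α)
    (h1 : α ≤ 1) : x ^ α * y ^ (1 - α) + x ^ (1 - α) * y ^ α ≤ x + y := by
  have h1' : 0 ≤ 1 - α := by linarith
  have := geom_mean_le_arith_mean2_weighted h0 h1' hx hy (by ring)
  have := geom_mean_le_arith_mean2_weighted h1' h0 hx hy (by ring)
  linarith

end Real

namespace Matrix

variable {m : Type*} [Fintype m] [DecidableEq m]

theorem trace_diagonal_mul_diagonal_mul {R : Type*} [CommSemiring R] (d e : m → R)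
    (B : Matrix m m R) :
    trace (diagonal d * B * diagonal e * B) = ∑ i, ∑ j, d i * e j * (B i j * B j i) := by
  refine Finset.sum_congr rfl fun i _ => ?_
  rw [diag_apply, mul_apply]
  refine Finset.sum_congr rfl fun j _ => ?_
  rw [mul_diagonal, diagonal_mul]
  ring

theorem IsHermitian.exists_trace_cfc_mul_cfc_mul_eq {𝕜 : Type*} [RCLike 𝕜] {T A : Matrix m m 𝕜}
    (hT : T.IsHermitian) (hA : A.IsHermitian) :
    ∃ c : m → m → ℝ, (∀ i j, 0 ≤ c i j) ∧ (∀ i j, c i j = c j i) ∧ ∀ f g : ℝ → ℝ,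
      trace (hT.cfc f * A * hT.cfc g * A) =
        ((∑ i, ∑ j, f (hT.eigenvalues i) * g (hT.eigenvalues j) * c i j : ℝ) : 𝕜) := by
  set U : Matrix m m 𝕜 := (hT.eigenvectorUnitary : Matrix m m 𝕜)
  set B := star U * A * U
  have hB : B.IsHermitian := by
    simpa [B, star_eq_conjTranspose, Matrix.mul_assoc] using
      isHermitian_conjTranspose_mul_mul U hA
  refine ⟨fun i j => ‖B i j‖ ^ 2, fun i j => by positivity, fun i j => ?_, fun f g => ?_⟩
  · simp only [← hB.apply i j, norm_star]
  set D : Matrix m m 𝕜 := diagonal (RCLike.ofReal ∘ f ∘ hT.eigenvalues)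
  set E : Matrix m m 𝕜 := diagonal (RCLike.ofReal ∘ g ∘ hT.eigenvalues)
  have hcfc : hT.cfc f * A * hT.cfc g * A = U * (D * B * E * (star U * A)) := by
    simp only [IsHermitian.cfc, Unitary.conjStarAlgAut_apply, B, D, E, U, Matrix.mul_assoc]
  rw [hcfc, trace_mul_comm, Matrix.mul_assoc _ (star U * A)]
  change trace (D * B * E * B) = _
  rw [trace_diagonal_mul_diagonal_mul]
  push_cast
  refine Finset.sum_congr rfl fun i _ => Finset.sum_congr rfl fun j _ => ?_
  rw [← hB.apply j i, RCLike.star_def, RCLike.mul_conj]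
  rfl

end Matrix

open Matrix ComplexOrder in
theorem trace_sqrt_chain {n : ℕ} (α : ℝ) (hα : α ∈ Set.Icc (0 : ℝ) 1)
    (T A : Matrix (Fin n) (Fin n) ℂ) (hT : T.PosSemidef) (hA : A.IsHermitian) :
    trace ((hT.1.cfc (fun x : ℝ => x ^ ((2 : ℝ)⁻¹)) * A) ^ 2) ≤
        trace (hT.1.cfc (fun x : ℝ => x ^ α) * A * hT.1.cfc (fun x : ℝ => x ^ (1 - α)) * A) ∧
      trace (hT.1.cfc (fun x : ℝ => x ^ α) * A * hT.1.cfc (fun x : ℝ => x ^ (1 - α)) * A) ≤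
        trace (T * A ^ 2) := by
  obtain ⟨c, hc, hc_symm, htrace⟩ := hT.1.exists_trace_cfc_mul_cfc_mul_eq hA
  have hev := hT.eigenvalues_nonneg
  have hTA : T * A ^ 2 = hT.1.cfc (fun x => x) * A * hT.1.cfc (fun _ => 1) * A := by
    rw [← hT.1.cfc_eq, ← hT.1.cfc_eq, cfc_id' ℝ T hT.1.isSelfAdjoint,
      cfc_const_one ℝ T hT.1.isSelfAdjoint, Matrix.mul_one, sq, Matrix.mul_assoc]
  rw [sq (_ * A), ← Matrix.mul_assoc (_ * A), hTA]
  simp only [htrace, RCLike.ofReal_eq_complex_ofReal, Complex.real_le_real, mul_one]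
  constructor
  · refine Finset.sum_sum_mul_le_of_add_swap_le hc hc_symm fun i j => ?_
    have := Real.two_mul_rpow_inv_two_mul_rpow_inv_two_le (α := α) (hev i) (hev j)
    linarith
  · refine Finset.sum_sum_mul_le_of_add_swap_le hc hc_symm fun i j => ?_
    have := Real.rpow_mul_rpow_add_rpow_mul_rpow_le_add (hev i) (hev j) hα.1 hα.2
    linarith
end

section
/- Let A, X be Hermitian n×n matrices with spectrum of A contained in D ⊂ ℝ, and let f, g be real functions on D satisfying (f(a) − f(b))(g(a) − g(b)) ≥ 0 for all a, b ∈ D. Then Tr[f(A) X g(A) X] ≤ Tr[f(A) g(A) X²]. -/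
/-!
Conjugating by the eigenvector unitary of `A` makes `f(A)` and `g(A)` diagonal, and turns `X` into a
Hermitian `Y`. In that basis both traces are sums over `i, j` weighted by `|Y i j|²`, with
coefficients `f(λᵢ) g(λⱼ)` and `f(λᵢ) g(λᵢ)`; since the weights are symmetric, twice their
difference is `∑ (f(λᵢ) - f(λⱼ)) (g(λᵢ) - g(λⱼ)) |Y i j|² ≥ 0`.
-/

open Matrix Unitary

theorem Finset.sum_sum_mul_mul_le_of_sub_mul_sub_mul_nonneg {ι R : Type*} [CommRing R]
    [LinearOrder R] [IsStrictOrderedRing R] (s : Finset ι) (u v : ι → R) (w : ι → ι → R)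
    (hw : ∀ i j, w i j = w j i)
    (huvw : ∀ i ∈ s, ∀ j ∈ s, 0 ≤ (u i - u j) * (v i - v j) * w i j) :
    ∑ i ∈ s, ∑ j ∈ s, u i * v j * w i j ≤ ∑ i ∈ s, ∑ j ∈ s, u i * v i * w i j := by
  have swap (F : ι → ι → R) :
      ∑ i ∈ s, ∑ j ∈ s, F i j * w i j = ∑ i ∈ s, ∑ j ∈ s, F j i * w i j := by
    rw [Finset.sum_comm]
    simp_rw [hw]
  have expand : ∑ i ∈ s, ∑ j ∈ s, (u i - u j) * (v i - v j) * w i j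
      = (∑ i ∈ s, ∑ j ∈ s, u i * v i * w i j + ∑ i ∈ s, ∑ j ∈ s, u j * v j * w i j)
        - (∑ i ∈ s, ∑ j ∈ s, u i * v j * w i j + ∑ i ∈ s, ∑ j ∈ s, u j * v i * w i j) := by
    simp only [← Finset.sum_add_distrib, ← Finset.sum_sub_distrib]
    exact Finset.sum_congr rfl fun i _ => Finset.sum_congr rfl fun j _ => by ring
  have hsum : 0 ≤ ∑ i ∈ s, ∑ j ∈ s, (u i - u j) * (v i - v j) * w i j :=
    Finset.sum_nonneg fun i hi => Finset.sum_nonneg fun j hj => huvw i hi j hj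
  rw [expand, ← swap fun i j => u i * v i, ← swap fun i j => u i * v j] at hsum
  linarith

namespace Matrix

variable {ι : Type*}

theorem IsHermitian.mul_apply_swap {𝕜 : Type*} [RCLike 𝕜] {Y : Matrix ι ι 𝕜}
    (hY : Y.IsHermitian) (i j : ι) : Y i j * Y j i = ((‖Y i j‖ ^ 2 : ℝ) : 𝕜) := by
  rw [← hY.apply j i, RCLike.star_def, RCLike.mul_conj]
  push_cast
  rfl

variable [Fintype ι] [DecidableEq ι]

theorem trace_conjStarAlgAut {S R : Type*} [CommSemiring R] [StarRing R]
    [SMul S (Matrix ι ι R)] [IsScalarTower S (Matrix ι ι R) (Matrix ι ι R)]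
    [SMulCommClass S (Matrix ι ι R) (Matrix ι ι R)]
    (u : unitary (Matrix ι ι R)) (M : Matrix ι ι R) :
    trace (conjStarAlgAut S _ u M) = trace M := by
  rw [conjStarAlgAut_apply, trace_mul_cycle, coe_star_mul_self, Matrix.one_mul]

theorem trace_diagonal_mul_mul_diagonal_mul {R : Type*} [CommSemiring R] (a b : ι → R)
    (Y : Matrix ι ι R) :
    trace (diagonal a * Y * diagonal b * Y) = ∑ i, ∑ j, a i * b j * (Y i j * Y j i) := by
  refine Finset.sum_congr rfl fun i _ => ?_
  rw [diag_apply, mul_apply]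
  simp only [mul_diagonal, diagonal_mul]
  exact Finset.sum_congr rfl fun j _ => by ring

theorem trace_diagonal_mul_sq {R : Type*} [CommSemiring R] (a : ι → R) (Y : Matrix ι ι R) :
    trace (diagonal a * Y ^ 2) = ∑ i, ∑ j, a i * (Y i j * Y j i) := by
  refine Finset.sum_congr rfl fun i _ => ?_
  rw [diag_apply, diagonal_mul, sq, mul_apply, Finset.mul_sum]

namespace IsHermitian

variable {𝕜 : Type*} [RCLike 𝕜] {A : Matrix ι ι 𝕜} (hA : A.IsHermitian) (f g : ℝ → ℝ)
  {X Y : Matrix ι ι 𝕜} (hXY : X = conjStarAlgAut 𝕜 _ hA.eigenvectorUnitary Y)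
include hXY

theorem trace_cfc_mul_mul_cfc_mul :
    trace (hA.cfc f * X * hA.cfc g * X)
      = ∑ i, ∑ j, ((f (hA.eigenvalues i) * g (hA.eigenvalues j) : ℝ) : 𝕜) * (Y i j * Y j i) := by
  rw [hXY, IsHermitian.cfc, IsHermitian.cfc, ← map_mul, ← map_mul, ← map_mul, trace_conjStarAlgAut,
    trace_diagonal_mul_mul_diagonal_mul]
  simp

theorem trace_cfc_mul_cfc_mul_sq :
    trace (hA.cfc f * hA.cfc g * X ^ 2)
      = ∑ i, ∑ j, ((f (hA.eigenvalues i) * g (hA.eigenvalues i) : ℝ) : 𝕜) * (Y i j * Y j i) := by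
  rw [hXY, IsHermitian.cfc, IsHermitian.cfc, ← map_mul, ← map_pow, ← map_mul, trace_conjStarAlgAut,
    diagonal_mul_diagonal, trace_diagonal_mul_sq]
  simp

end IsHermitian

end Matrix

open Matrix ComplexOrder in
theorem bourin_fujii_i {n : ℕ} (A X : Matrix (Fin n) (Fin n) ℂ)
    (hA : A.IsHermitian) (hX : X.IsHermitian) (D : Set ℝ) (f g : ℝ → ℝ)
    (hspec : ∀ i, hA.eigenvalues i ∈ D)
    (hfg : ∀ a ∈ D, ∀ b ∈ D, 0 ≤ (f a - f b) * (g a - g b)) :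
    trace (hA.cfc f * X * hA.cfc g * X) ≤ trace (hA.cfc f * hA.cfc g * X ^ 2) := by
  set φ := conjStarAlgAut ℂ (Matrix (Fin n) (Fin n) ℂ) hA.eigenvectorUnitary
  set Y := φ.symm X
  have hY : Y.IsHermitian := (map_star φ.symm X).symm.trans (congrArg φ.symm hX)
  have hXY : X = φ Y := (φ.apply_symm_apply X).symm
  rw [hA.trace_cfc_mul_mul_cfc_mul f g hXY, hA.trace_cfc_mul_cfc_mul_sq f g hXY]
  simp only [hY.mul_apply_swap, ← RCLike.ofReal_mul, ← RCLike.ofReal_sum, RCLike.ofReal_le_ofReal]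
  refine Finset.sum_sum_mul_mul_le_of_sub_mul_sub_mul_nonneg _ _ _ (fun i j => ‖Y i j‖ ^ 2)
    (fun i j => by rw [← hY.apply i j, norm_star]) fun i _ j _ => ?_
  exact mul_nonneg (hfg _ (hspec i) _ (hspec j)) (sq_nonneg _)
end

section
/- Let A, X be Hermitian n×n matrices with spectrum of A contained in D ⊂ ℝ, and let f, g be real functions on D satisfying (f(a) − f(b))(g(a) − g(b)) ≤ 0 for all a, b ∈ D. Then Tr[f(A) X g(A) X] ≥ Tr[f(A) g(A) X²]. -/
open Finset in
private lemma bf_real_key {n : ℕ} (φ ψ : Fin n → ℝ) (s : Fin n → Fin n → ℝ)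
    (hs : ∀ i j, 0 ≤ s i j) (hsym : ∀ i j, s i j = s j i)
    (h : ∀ i j, (φ i - φ j) * (ψ i - ψ j) ≤ 0) :
    ∑ i, ∑ j, φ i * ψ i * s i j ≤ ∑ i, ∑ j, φ i * ψ j * s i j := by
  set L := ∑ i, ∑ j, φ i * ψ i * s i j with hL
  set R := ∑ i, ∑ j, φ i * ψ j * s i j with hR
  have key : 0 ≤ 2 * (R - L) := by
    have e1 : R - L = ∑ i, ∑ j, (φ i * ψ j - φ i * ψ i) * s i j := by
      rw [hL, hR, ← Finset.sum_sub_distrib]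
      refine Finset.sum_congr rfl fun i _ => ?_
      rw [← Finset.sum_sub_distrib]
      exact Finset.sum_congr rfl fun j _ => by ring
    have e2 : ∑ i, ∑ j, (φ i * ψ j - φ i * ψ i) * s i j
        = ∑ i, ∑ j, (φ j * ψ i - φ j * ψ j) * s i j := by
      rw [Finset.sum_comm]
      refine Finset.sum_congr rfl fun i _ => Finset.sum_congr rfl fun j _ => ?_
      rw [hsym i j]
    have e3 : 2 * (R - L) = ∑ i, ∑ j,
        (-((φ i - φ j) * (ψ i - ψ j))) * s i j := by
      rw [two_mul]
      nth_rewrite 1 [e1]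
      rw [e2, e1, ← Finset.sum_add_distrib]
      refine Finset.sum_congr rfl fun i _ => ?_
      rw [← Finset.sum_add_distrib]
      exact Finset.sum_congr rfl fun j _ => by ring
    rw [e3]
    refine Finset.sum_nonneg fun i _ => Finset.sum_nonneg fun j _ => ?_
    exact mul_nonneg (by linarith [h i j]) (hs i j)
  linarith

open Matrix ComplexOrder in
theorem bourin_fujii_ii {n : ℕ} (A X : Matrix (Fin n) (Fin n) ℂ)
    (hA : A.IsHermitian) (hX : X.IsHermitian) (D : Set ℝ) (f g : ℝ → ℝ)
    (hspec : ∀ i, hA.eigenvalues i ∈ D)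
    (hfg : ∀ a ∈ D, ∀ b ∈ D, (f a - f b) * (g a - g b) ≤ 0) :
    trace (hA.cfc f * hA.cfc g * X ^ 2) ≤ trace (hA.cfc f * X * hA.cfc g * X) := by
  set U : Matrix (Fin n) (Fin n) ℂ := (hA.eigenvectorUnitary : Matrix (Fin n) (Fin n) ℂ)
    with hUdef
  have hU1 : star U * U = 1 := UnitaryGroup.star_mul_self hA.eigenvectorUnitary
  have hU2 : U * star U = 1 := mem_unitaryGroup_iff.mp hA.eigenvectorUnitary.2
  set Y : Matrix (Fin n) (Fin n) ℂ := star U * X * U with hYdef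
  have hY : Y.IsHermitian := by
    rw [hYdef, show star U = Uᴴ from rfl]
    exact isHermitian_conjTranspose_mul_mul U hX
  have hXY : X = U * Y * star U := by
    rw [hYdef]
    calc X = 1 * X * 1 := by rw [one_mul, mul_one]
    _ = (U * star U) * X * (U * star U) := by rw [hU2]
    _ = U * (star U * X * U) * star U := by
        simp only [mul_assoc]
  set Df : Matrix (Fin n) (Fin n) ℂ :=
    diagonal (RCLike.ofReal ∘ f ∘ hA.eigenvalues) with hDf
  set Dg : Matrix (Fin n) (Fin n) ℂ :=
    diagonal (RCLike.ofReal ∘ g ∘ hA.eigenvalues) with hDg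
  have hcfcf : hA.cfc f = U * Df * star U := rfl
  have hcfcg : hA.cfc g = U * Dg * star U := rfl
  have conj_mul : ∀ M N : Matrix (Fin n) (Fin n) ℂ,
      (U * M * star U) * (U * N * star U) = U * (M * N) * star U := by
    intro M N
    simp only [mul_assoc]
    rw [← mul_assoc (star U) U, hU1, one_mul]
  have trace_conj : ∀ M : Matrix (Fin n) (Fin n) ℂ,
      trace (U * M * star U) = trace M := by
    intro M
    rw [trace_mul_cycle, hU1, one_mul]
  set ev : Fin n → ℝ := hA.eigenvalues with hev
  have hstar : ∀ i j, Y j i = star (Y i j) := by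
    intro i j
    rw [← hY.apply i j, star_star]
  have hR : trace (hA.cfc f * X * hA.cfc g * X) = trace (Df * Y * Dg * Y) := by
    rw [hcfcf, hcfcg, hXY, conj_mul, conj_mul, conj_mul, trace_conj]
  have hL : trace (hA.cfc f * hA.cfc g * X ^ 2) = trace (Df * Dg * (Y * Y)) := by
    rw [hcfcf, hcfcg, sq, hXY, conj_mul, conj_mul, conj_mul, trace_conj]
  have hRsum : trace (Df * Y * Dg * Y)
      = ((∑ i, ∑ j, f (ev i) * g (ev j) * Complex.normSq (Y i j) : ℝ) : ℂ) := by
    have entry : ∀ i j, (Df * Y * Dg) i j = (f (ev i) : ℂ) * Y i j * (g (ev j) : ℂ) := by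
      intro i j
      rw [hDf, hDg, Matrix.mul_diagonal, Matrix.diagonal_mul]
      simp [Function.comp, hev, mul_comm, mul_assoc, mul_left_comm]
    rw [Matrix.trace]
    push_cast
    refine Finset.sum_congr rfl fun i _ => ?_
    rw [Matrix.diag_apply, Matrix.mul_apply]
    refine Finset.sum_congr rfl fun j _ => ?_
    rw [entry i j, hstar i j]
    have hmc : Y i j * star (Y i j) = (Complex.normSq (Y i j) : ℂ) := Complex.mul_conj _
    calc (f (ev i) : ℂ) * Y i j * (g (ev j) : ℂ) * star (Y i j)
        = (f (ev i) : ℂ) * (g (ev j) : ℂ) * (Y i j * star (Y i j)) := by ring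
    _ = (f (ev i) : ℂ) * (g (ev j) : ℂ) * (Complex.normSq (Y i j) : ℂ) := by rw [hmc]
    _ = _ := by push_cast; ring
  have hLsum : trace (Df * Dg * (Y * Y))
      = ((∑ i, ∑ j, f (ev i) * g (ev i) * Complex.normSq (Y i j) : ℝ) : ℂ) := by
    have hDfg : Df * Dg = diagonal (fun i => (f (ev i) : ℂ) * (g (ev i) : ℂ)) := by
      rw [hDf, hDg, Matrix.diagonal_mul_diagonal]
      rfl
    rw [Matrix.trace]
    push_cast
    refine Finset.sum_congr rfl fun i _ => ?_
    rw [Matrix.diag_apply, hDfg, Matrix.diagonal_mul, Matrix.mul_apply, Finset.mul_sum]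
    refine Finset.sum_congr rfl fun j _ => ?_
    rw [hstar i j]
    have hmc : Y i j * star (Y i j) = (Complex.normSq (Y i j) : ℂ) := Complex.mul_conj _
    calc (f (ev i) : ℂ) * (g (ev i) : ℂ) * (Y i j * star (Y i j))
        = (f (ev i) : ℂ) * (g (ev i) : ℂ) * (Complex.normSq (Y i j) : ℂ) := by rw [hmc]
    _ = _ := by push_cast; ring
  rw [hR, hL, hRsum, hLsum, Complex.real_le_real]
  refine bf_real_key (fun i => f (ev i)) (fun i => g (ev i))
    (fun i j => Complex.normSq (Y i j)) (fun i j => Complex.normSq_nonneg _)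
    (fun i j => ?_) (fun i j => hfg _ (hspec i) _ (hspec j))
  show Complex.normSq (Y i j) = Complex.normSq (Y j i)
  rw [hstar i j]
  exact (Complex.normSq_conj _).symm
end

section
/- Let T and A be positive semidefinite 2×2 complex matrices and p₁,…,p_m positive reals with p₁+⋯+p_m = 1. Then Tr[(T^{1/m} A)^m] ≤ Tr[T^{p₁} A T^{p₂} A ⋯ T^{p_m} A] ≤ Tr[T A^m]. -/
/-!
Conjugating by an eigenvector unitary of `T`, followed by a diagonal phase matrix (which commutes
with every function of `T`), makes `T` a nonnegative diagonal matrix `diagonal x` and, since the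
matrices are `2 × 2`, makes `A` a matrix `C` with nonnegative real entries. Expanding the trace of
a product of the matrices `diagonal (d i) * C` over closed paths `τ : Fin m → Fin 2`, each of the
three traces becomes `∑ τ, (∏ i, d i (τ i)) * w τ`, whose weights `w τ = ∏ i, C (τ i) (τ (i + 1))`
are nonnegative and invariant under cyclic rotation of `τ`. Averaging over the `m` rotations of
each path reduces both inequalities to the AM-GM inequality.
-/

open Finset Matrix ComplexOrder Complex Unitary

namespace Matrix

variable {R n : Type*} [CommSemiring R] [Fintype n] [DecidableEq n]

theorem list_ofFn_prod_apply {m : ℕ} (M : Fin (m + 1) → Matrix n n R) (a b : n) :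
    (List.ofFn M).prod a b =
      ∑ τ : Fin m → n,
        ∏ i, M i (Fin.cons (α := fun _ => n) a τ i) (Fin.snoc (α := fun _ => n) τ b i) := by
  induction m generalizing a with
  | zero => simp [Fin.snoc]
  | succ m ih =>
    rw [List.ofFn_succ, List.prod_cons, mul_apply, ← (Fin.consEquiv fun _ => n).sum_comp,
      Fintype.sum_prod_type]
    refine sum_congr rfl fun c _ => ?_
    rw [ih, mul_sum]
    refine sum_congr rfl fun τ _ => ?_
    rw [Fin.prod_univ_succ (n := m + 1)]
    simp only [Fin.consEquiv, Equiv.coe_fn_mk, ← Fin.cons_snoc_eq_snoc_cons, Fin.cons_zero,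
      Fin.cons_succ]

theorem trace_list_ofFn_prod {m : ℕ} [NeZero m] (M : Fin m → Matrix n n R) :
    trace (List.ofFn M).prod = ∑ τ : Fin m → n, ∏ i, M i (τ i) (τ (i + 1)) := by
  obtain ⟨k, rfl⟩ := Nat.exists_eq_succ_of_ne_zero (NeZero.ne m)
  simp only [trace, diag, list_ofFn_prod_apply, Fin.snoc_eq_cons_rotate, finRotate_apply]
  rw [← (Fin.consEquiv fun _ => n).sum_comp, Fintype.sum_prod_type]
  rfl

variable {m : ℕ} [NeZero m]

theorem trace_list_ofFn_diagonal_mul_prod (d : Fin m → n → R) (C : Matrix n n R) :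
    trace (List.ofFn fun i => diagonal (d i) * C).prod =
      ∑ τ : Fin m → n, (∏ i, d i (τ i)) * ∏ i, C (τ i) (τ (i + 1)) := by
  simp only [trace_list_ofFn_prod, diagonal_mul, prod_mul_distrib]

theorem list_ofFn_diagonal_ite_mul_prod (x : n → R) (C : Matrix n n R) :
    (List.ofFn fun i : Fin m => diagonal (if i = 0 then x else 1) * C).prod =
      diagonal x * C ^ m := by
  obtain ⟨k, rfl⟩ := Nat.exists_eq_succ_of_ne_zero (NeZero.ne m)
  simp [List.ofFn_succ, Fin.succ_ne_zero, List.ofFn_const, pow_succ', mul_assoc]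

end Matrix

section RotationAverage

variable {n : Type*} [Fintype n] {m : ℕ} [NeZero m] {w : (Fin m → n) → ℝ}

theorem sum_rotate_mul_eq_sum_mul (hw : ∀ k τ, w (fun i => τ (i + k)) = w τ)
    (f : (Fin m → n) → ℝ) (k : Fin m) :
    ∑ τ, f (fun i => τ (i + k)) * w τ = ∑ τ, f τ * w τ := by
  let e : (Fin m → n) ≃ (Fin m → n) := (Equiv.addRight k).symm.arrowCongr (Equiv.refl n)
  calc ∑ τ, f (fun i => τ (i + k)) * w τ = ∑ τ, f (e τ) * w (e τ) :=
        sum_congr rfl fun τ _ => by rw [← hw k τ]; rfl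
    _ = ∑ τ, f τ * w τ := e.sum_comp fun τ => f τ * w τ

theorem sum_mul_le_sum_mul_of_sum_rotate_le (hw₀ : ∀ τ, 0 ≤ w τ)
    (hw : ∀ k τ, w (fun i => τ (i + k)) = w τ) {f g : (Fin m → n) → ℝ}
    (hfg : ∀ τ : Fin m → n, ∑ k, f (fun i => τ (i + k)) ≤ ∑ k, g (fun i => τ (i + k))) :
    ∑ τ, f τ * w τ ≤ ∑ τ, g τ * w τ := by
  have average : ∀ h : (Fin m → n) → ℝ,
      (m : ℝ) * ∑ τ, h τ * w τ = ∑ τ, (∑ k, h (fun i => τ (i + k))) * w τ := fun h =>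
    calc (m : ℝ) * ∑ τ, h τ * w τ = ∑ k : Fin m, ∑ τ, h (fun i => τ (i + k)) * w τ := by
          simp [sum_rotate_mul_eq_sum_mul hw]
      _ = ∑ τ, (∑ k, h (fun i => τ (i + k))) * w τ := by
          simp only [sum_mul, sum_comm (γ := Fin m)]
  refine le_of_mul_le_mul_left ?_ (Nat.cast_pos.2 (NeZero.pos m) : (0 : ℝ) < m)
  rw [average, average]
  exact sum_le_sum fun τ _ => mul_le_mul_of_nonneg_right (hfg τ) (hw₀ τ)

end RotationAverage

section RotatedMeans

variable {m : ℕ} [NeZero m] {y p : Fin m → ℝ}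

theorem sum_prod_rpow_rotate_le_sum (hy : ∀ i, 0 ≤ y i) (hp : ∀ i, 0 ≤ p i)
    (hsum : ∑ i, p i = 1) : ∑ k, ∏ i, y (i + k) ^ p i ≤ ∑ k, y k :=
  calc ∑ k, ∏ i, y (i + k) ^ p i ≤ ∑ k, ∑ i, p i * y (i + k) :=
        sum_le_sum fun k _ => Real.geom_mean_le_arith_mean_weighted _ _ _
          (fun i _ => hp i) hsum fun i _ => hy _
    _ = ∑ i, p i * ∑ k, y k := by
        rw [sum_comm]
        refine sum_congr rfl fun i _ => ?_
        rw [← mul_sum]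
        exact congrArg _ (Equiv.sum_comp (Equiv.addLeft i) y)
    _ = ∑ k, y k := by rw [← sum_mul, hsum, one_mul]

theorem prod_prod_rpow_rotate_eq_prod (hy : ∀ i, 0 ≤ y i) (hp : ∀ i, 0 ≤ p i)
    (hsum : ∑ i, p i = 1) : ∏ k, ∏ i, y (i + k) ^ p i = ∏ j, y j :=
  calc ∏ k, ∏ i, y (i + k) ^ p i = ∏ i, ∏ j, y j ^ p i := by
        rw [prod_comm]
        exact prod_congr rfl fun i _ => Equiv.prod_comp (Equiv.addLeft i) fun j => y j ^ p i
    _ = ∏ j, y j := by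
        rw [prod_comm]
        refine prod_congr rfl fun j _ => ?_
        rw [← Real.rpow_sum_of_nonneg (hy j) fun i _ => hp i, hsum, Real.rpow_one]

theorem sum_prod_rpow_inv_rotate_le (hy : ∀ i, 0 ≤ y i) (hp : ∀ i, 0 ≤ p i)
    (hsum : ∑ i, p i = 1) :
    ∑ k, ∏ i, y (i + k) ^ (m : ℝ)⁻¹ ≤ ∑ k, ∏ i, y (i + k) ^ p i := by
  have hm : (0 : ℝ) < m := Nat.cast_pos.2 (NeZero.pos m)
  have amgm := Real.geom_mean_le_arith_mean univ (fun _ => 1) (fun k => ∏ i, y (i + k) ^ p i)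
    (fun _ _ => zero_le_one) (by simpa using hm)
    (fun k _ => prod_nonneg fun i _ => Real.rpow_nonneg (hy _) _)
  simp only [Real.rpow_one, sum_const, card_univ, Fintype.card_fin, nsmul_eq_mul, mul_one,
    one_mul, prod_prod_rpow_rotate_eq_prod hy hp hsum] at amgm
  calc ∑ k, ∏ i, y (i + k) ^ (m : ℝ)⁻¹ = ∑ _k : Fin m, ∏ j, y j ^ (m : ℝ)⁻¹ :=
        sum_congr rfl fun k _ => Equiv.prod_comp (Equiv.addRight k) fun j => y j ^ (m : ℝ)⁻¹
    _ = m * (∏ j, y j) ^ (m : ℝ)⁻¹ := by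
        rw [Real.finsetProd_rpow _ _ fun j _ => hy j, sum_const, card_univ, Fintype.card_fin,
          nsmul_eq_mul]
    _ ≤ ∑ k, ∏ i, y (i + k) ^ p i := by rwa [le_div_iff₀ hm, mul_comm] at amgm

end RotatedMeans

theorem Matrix.trace_diagonal_rpow_mul_chain_of_nonneg {n : Type*} [Fintype n] [DecidableEq n]
    {m : ℕ} [NeZero m] {C : Matrix n n ℝ} (hC : ∀ i j, 0 ≤ C i j) {x : n → ℝ}
    (hx : ∀ j, 0 ≤ x j) {p : Fin m → ℝ} (hp : ∀ i, 0 ≤ p i) (hsum : ∑ i, p i = 1) :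
    trace ((diagonal (fun j => x j ^ (m : ℝ)⁻¹) * C) ^ m) ≤
        trace (List.ofFn fun i => diagonal (fun j => x j ^ p i) * C).prod ∧
      trace (List.ofFn fun i => diagonal (fun j => x j ^ p i) * C).prod ≤
        trace (diagonal x * C ^ m) := by
  set w : (Fin m → n) → ℝ := fun τ => ∏ i, C (τ i) (τ (i + 1))
  have hw₀ : ∀ τ, 0 ≤ w τ := fun τ => prod_nonneg fun i _ => hC _ _
  have hw : ∀ k τ, w (fun i => τ (i + k)) = w τ := fun k τ => by
    simp only [w, add_right_comm _ (1 : Fin m)]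
    exact Equiv.prod_comp (Equiv.addRight k) fun i => C (τ i) (τ (i + 1))
  have hpow : (diagonal (fun j => x j ^ (m : ℝ)⁻¹) * C) ^ m =
      (List.ofFn fun _ : Fin m => diagonal (fun j => x j ^ (m : ℝ)⁻¹) * C).prod := by
    rw [List.ofFn_const, List.prod_replicate]
  have hfirst : ∀ τ : Fin m → n, ∏ i : Fin m, (if i = 0 then x else 1) (τ i) = x (τ 0) :=
    fun τ => by simp [ite_apply]
  rw [hpow, ← list_ofFn_diagonal_ite_mul_prod, trace_list_ofFn_diagonal_mul_prod,
    trace_list_ofFn_diagonal_mul_prod, trace_list_ofFn_diagonal_mul_prod]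
  simp only [hfirst]
  constructor
  · exact sum_mul_le_sum_mul_of_sum_rotate_le hw₀ hw fun τ =>
      sum_prod_rpow_inv_rotate_le (fun i => hx (τ i)) hp hsum
  · refine sum_mul_le_sum_mul_of_sum_rotate_le hw₀ hw fun τ => ?_
    simpa only [zero_add] using sum_prod_rpow_rotate_le_sum (fun i => hx (τ i)) hp hsum

theorem Matrix.PosSemidef.exists_diagonal_unitary_conj_nonneg {B : Matrix (Fin 2) (Fin 2) ℂ}
    (hB : B.PosSemidef) :
    ∃ s : Fin 2 → ℂ, (∀ i, star (s i) * s i = 1) ∧ ∀ i j, 0 ≤ star (s i) * B i j * s j := by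
  set z := B 0 1
  set u := exp (↑(-z.arg) * I)
  have hu : star u * u = 1 := by
    rw [Complex.star_def, conj_mul', norm_exp_ofReal_mul_I, ofReal_one, one_pow]
  have hzu : z * u = ‖z‖ := by
    conv_lhs => rw [← norm_mul_exp_arg_mul_I z]
    rw [mul_assoc, ← Complex.exp_add, ofReal_neg, neg_mul, add_neg_cancel, Complex.exp_zero,
      mul_one]
  have hB10 : B 1 0 = star z := (hB.1.apply 1 0).symm
  refine ⟨![1, u], fun i => ?_, fun i j => ?_⟩
  · fin_cases i
    exacts [(mul_one _).trans (star_one ℂ), hu]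
  fin_cases i <;> fin_cases j
  · show 0 ≤ star 1 * B 0 0 * 1
    rw [star_one, one_mul, mul_one]
    exact hB.diag_nonneg
  · show 0 ≤ star 1 * z * u
    rw [star_one, one_mul, hzu]
    exact zero_le_real.mpr (norm_nonneg z)
  · show 0 ≤ star u * B 1 0 * 1
    rw [mul_one, hB10, ← star_mul', mul_comm, hzu, Complex.star_def, conj_ofReal]
    exact zero_le_real.mpr (norm_nonneg z)
  · show 0 ≤ star u * B 1 1 * u
    rw [mul_right_comm, hu, one_mul]
    exact hB.diag_nonneg

theorem Matrix.diagonal_mem_unitary {n : Type*} [Fintype n] [DecidableEq n] {s : n → ℂ}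
    (hs : ∀ i, star (s i) * s i = 1) : diagonal s ∈ unitary (Matrix n n ℂ) := by
  rw [← unitaryGroup, mem_unitaryGroup_iff', star_eq_conjTranspose, diagonal_conjTranspose,
    diagonal_mul_diagonal, ← diagonal_one]
  exact congrArg diagonal (funext hs)

theorem Matrix.PosSemidef.exists_ringHom_nonneg_real_form {T A : Matrix (Fin 2) (Fin 2) ℂ}
    (hT : T.PosSemidef) (hA : A.PosSemidef) :
    ∃ (ψ : Matrix (Fin 2) (Fin 2) ℝ →+* Matrix (Fin 2) (Fin 2) ℂ) (C : Matrix (Fin 2) (Fin 2) ℝ)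
      (x : Fin 2 → ℝ), (∀ X, trace (ψ X) = trace X) ∧ (∀ i j, 0 ≤ C i j) ∧ (∀ j, 0 ≤ x j) ∧
        A = ψ C ∧ T = ψ (diagonal x) ∧ ∀ f : ℝ → ℝ, hT.1.cfc f = ψ (diagonal (f ∘ x)) := by
  set U := hT.1.eigenvectorUnitary
  obtain ⟨s, hs, hsB⟩ := (hA.conjTranspose_mul_mul_same U.1).exists_diagonal_unitary_conj_nonneg
  set S : unitary (Matrix (Fin 2) (Fin 2) ℂ) := ⟨diagonal s, diagonal_mem_unitary hs⟩
  set V := U * S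
  set φ := conjStarAlgAut ℂ (Matrix (Fin 2) (Fin 2) ℂ) V
  have hφA : ∀ i j, 0 ≤ φ.symm A i j := fun i j => by
    have hconj : φ.symm A = star (diagonal s) * (U.1ᴴ * A * U.1) * diagonal s := by
      show star (U.1 * diagonal s) * A * (U.1 * diagonal s) = _
      simp only [star_mul, mul_assoc, star_eq_conjTranspose]
    rw [hconj, mul_diagonal, star_eq_conjTranspose, diagonal_conjTranspose, diagonal_mul]
    exact hsB i j
  have hφS : ∀ d, conjStarAlgAut ℂ _ S (diagonal d) = diagonal d := fun d => by
    rw [conjStarAlgAut_apply, show (S : Matrix (Fin 2) (Fin 2) ℂ) * diagonal d = diagonal d * S by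
      simp only [S, diagonal_mul_diagonal, mul_comm], mul_assoc, mul_star_self_of_mem S.2, mul_one]
  have hcfc : ∀ f : ℝ → ℝ, hT.1.cfc f = φ ((diagonal (f ∘ hT.1.eigenvalues)).map ofRealHom) :=
    fun f => by
      rw [IsHermitian.cfc, diagonal_map (map_zero _), conjStarAlgAut_mul_apply, hφS]
      rfl
  have hreal : ((φ.symm A).map re).map ofRealHom = φ.symm A := by
    ext i j
    exact (eq_re_of_ofReal_le (by rw [ofReal_zero]; exact hφA i j)).symm
  refine ⟨φ.toRingHom.comp ofRealHom.mapMatrix, (φ.symm A).map re, hT.1.eigenvalues, fun X => ?_,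
    fun i j => (nonneg_iff.mp (hφA i j)).1, hT.eigenvalues_nonneg, ?_,
    hT.1.spectral_theorem.trans (hcfc id), hcfc⟩
  · show trace ((V : Matrix (Fin 2) (Fin 2) ℂ) * X.map ofRealHom * star (V : Matrix _ _ ℂ)) = _
    rw [trace_mul_cycle, star_mul_self_of_mem V.2, one_mul, ← AddMonoidHom.map_trace]
    rfl
  · show A = φ (((φ.symm A).map re).map ofRealHom)
    rw [hreal, φ.apply_symm_apply]

open Matrix ComplexOrder in
theorem trace_prod_fracPow_chain_general {m : ℕ}
    (T A : Matrix (Fin 2) (Fin 2) ℂ) (hT : T.PosSemidef) (hA : A.PosSemidef)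
    (p : Fin m → ℝ) (hp : ∀ i, 0 < p i) (hsum : ∑ i, p i = 1) :
    trace ((hT.1.cfc (fun x : ℝ => x ^ ((m : ℝ)⁻¹)) * A) ^ m) ≤
        trace (List.ofFn (fun i : Fin m => hT.1.cfc (fun x : ℝ => x ^ p i) * A)).prod ∧
      trace (List.ofFn (fun i : Fin m => hT.1.cfc (fun x : ℝ => x ^ p i) * A)).prod ≤
        trace (T * A ^ m) := by
  have : NeZero m := ⟨by rintro rfl; simp at hsum⟩
  obtain ⟨ψ, C, x, hψ, hC, hx, rfl, rfl, hcfc⟩ := hT.exists_ringHom_nonneg_real_form hA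
  have hprod : ∀ X : Fin m → Matrix (Fin 2) (Fin 2) ℝ,
      (List.ofFn fun i => ψ (X i)).prod = ψ (List.ofFn X).prod := fun X => by
    rw [map_list_prod, List.map_ofFn]
    rfl
  simp only [hcfc, ← map_mul, ← map_pow, hprod, hψ, Complex.real_le_real, Function.comp_def]
  exact trace_diagonal_rpow_mul_chain_of_nonneg hC hx (fun i => (hp i).le) hsum

open Matrix ComplexOrder in
theorem trace_prod_fracPow_chain {m : ℕ} (hm : 0 < m)
    (T A : Matrix (Fin 2) (Fin 2) ℂ) (hT : T.PosSemidef) (hA : A.PosSemidef)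
    (p : Fin m → ℝ) (hp : ∀ i, 0 < p i) (hsum : ∑ i, p i = 1) :
    trace ((hT.1.cfc (fun x : ℝ => x ^ ((m : ℝ)⁻¹)) * A) ^ m) ≤
        trace (List.ofFn (fun i : Fin m => hT.1.cfc (fun x : ℝ => x ^ p i) * A)).prod ∧
      trace (List.ofFn (fun i : Fin m => hT.1.cfc (fun x : ℝ => x ^ p i) * A)).prod ≤
        trace (T * A ^ m) :=
  trace_prod_fracPow_chain_general T A hT hA p hp hsum
end

section
/- Let T and A be positive semidefinite 2×2 complex matrices and p₁,…,p_m positive reals summing to 1. Then the trace Tr[T^{p₁} A T^{p₂} A ⋯ T^{p_m} A] is a nonnegative real number. -/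
/-!
Conjugating by the eigenvector unitary `U` of `T` turns each factor `T ^ pᵢ * A` into `Dᵢ * B`,
with `Dᵢ` diagonal with nonnegative entries and `B = U⋆ A U` positive semidefinite. Hence every
factor has the shape `!![a, c * z; d * star z, b]` with `a, b, c, d ≥ 0` and the same `z = B 0 1`.
Since `z * star z ≥ 0`, such matrices form a monoid, and their trace `a + b` is nonnegative.
-/

namespace Matrix

theorem trace_conjStarAlgAut_s10 {S R n : Type*} [CommSemiring S] [CommSemiring R] [StarRing R]
    [Algebra S R] [Fintype n] [DecidableEq n] (u : unitary (Matrix n n R)) (X : Matrix n n R) :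
    (Unitary.conjStarAlgAut S _ u X).trace = X.trace := by
  rw [Unitary.conjStarAlgAut_apply, trace_mul_cycle, Unitary.coe_star_mul_self, one_mul]

variable {R : Type*} [CommRing R] [PartialOrder R] [IsOrderedRing R] [StarRing R]
  [StarOrderedRing R]

def phaseSubmonoid (z : R) : Submonoid (Matrix (Fin 2) (Fin 2) R) where
  carrier := {P | 0 ≤ P 0 0 ∧ 0 ≤ P 1 1 ∧ (∃ c, 0 ≤ c ∧ P 0 1 = c * z) ∧
    ∃ d, 0 ≤ d ∧ P 1 0 = d * star z}
  one_mem' := ⟨by simp, by simp, ⟨0, le_rfl, by simp⟩, ⟨0, le_rfl, by simp⟩⟩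
  mul_mem' := by
    rintro P Q ⟨hP₀, hP₁, ⟨c, hc, hP₀₁⟩, ⟨d, hd, hP₁₀⟩⟩
      ⟨hQ₀, hQ₁, ⟨c', hc', hQ₀₁⟩, ⟨d', hd', hQ₁₀⟩⟩
    have hz := mul_star_self_nonneg z
    simp only [Set.mem_ofPred_eq, mul_apply, Fin.sum_univ_two, hP₀₁, hP₁₀, hQ₀₁, hQ₁₀]
    refine ⟨?_, ?_, ⟨P 0 0 * c' + c * Q 1 1, by positivity, by ring⟩,
      ⟨d * Q 0 0 + P 1 1 * d', by positivity, by ring⟩⟩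
    · have : c * z * (d' * star z) = c * d' * (z * star z) := by ring
      rw [this]; positivity
    · have : d * star z * (c' * z) = d * c' * (z * star z) := by ring
      rw [this]; positivity

theorem trace_nonneg_of_mem_phaseSubmonoid {z : R} {P : Matrix (Fin 2) (Fin 2) R}
    (hP : P ∈ phaseSubmonoid z) : 0 ≤ P.trace := by
  rw [trace_fin_two]
  exact add_nonneg hP.1 hP.2.1

theorem PosSemidef.diagonal_mul_mem_phaseSubmonoid {d : Fin 2 → R} (hd : 0 ≤ d)
    {B : Matrix (Fin 2) (Fin 2) R} (hB : B.PosSemidef) :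
    diagonal d * B ∈ phaseSubmonoid (B 0 1) := by
  simp only [phaseSubmonoid, Submonoid.mem_mk, Subsemigroup.mem_mk, Set.mem_ofPred_eq,
    diagonal_mul]
  exact ⟨mul_nonneg (hd 0) hB.diag_nonneg, mul_nonneg (hd 1) hB.diag_nonneg, ⟨d 0, hd 0, rfl⟩,
    ⟨d 1, hd 1, by rw [← hB.1.apply 1 0]⟩⟩

end Matrix

open Matrix ComplexOrder in
theorem trace_prod_fracPow_nonneg_general {m : ℕ}
    (T A : Matrix (Fin 2) (Fin 2) ℂ) (hT : T.PosSemidef) (hA : A.PosSemidef)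
    (p : Fin m → ℝ) :
    0 ≤ trace (List.ofFn (fun i : Fin m => hT.1.cfc (fun x : ℝ => x ^ p i) * A)).prod := by
  set φ := Unitary.conjStarAlgAut ℂ _ hT.1.eigenvectorUnitary
  set B := φ.symm A
  have hB : B.PosSemidef := hA.conjTranspose_mul_mul_same _
  set X : Fin m → Matrix (Fin 2) (Fin 2) ℂ := fun i ↦
    diagonal (RCLike.ofReal ∘ (fun x : ℝ => x ^ p i) ∘ hT.1.eigenvalues) * B
  have hfactor : ∀ i, hT.1.cfc (fun x : ℝ => x ^ p i) * A = φ (X i) := by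
    intro i
    rw [map_mul, StarAlgEquiv.apply_symm_apply]
    rfl
  have hprod : (List.ofFn fun i ↦ hT.1.cfc (fun x : ℝ => x ^ p i) * A).prod =
      φ (List.ofFn X).prod := by
    simp only [map_list_prod, List.map_ofFn, Function.comp_def, hfactor]
  rw [hprod, trace_conjStarAlgAut_s10]
  refine trace_nonneg_of_mem_phaseSubmonoid (z := B 0 1) (list_prod_mem ?_)
  simp only [List.forall_mem_ofFn_iff]
  refine fun i ↦ hB.diagonal_mul_mem_phaseSubmonoid fun j ↦ ?_
  simpa using Real.rpow_nonneg (hT.eigenvalues_nonneg j) (p i)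

open Matrix ComplexOrder in
theorem trace_prod_fracPow_nonneg {m : ℕ}
    (T A : Matrix (Fin 2) (Fin 2) ℂ) (hT : T.PosSemidef) (hA : A.PosSemidef)
    (p : Fin m → ℝ) (hp : ∀ i, 0 < p i) (hsum : ∑ i, p i = 1) :
    0 ≤ trace (List.ofFn (fun i : Fin m => hT.1.cfc (fun x : ℝ => x ^ p i) * A)).prod :=
  trace_prod_fracPow_nonneg_general T A hT hA p
end

section
/- Let A be a 2×2 positive semidefinite complex matrix and {ψ₀, ψ₁} an orthonormal basis of ℂ². For any indices i₁,…,i_m ∈ {0,1}, the product ⟨ψ_{i₁}|A|ψ_{i₂}⟩⟨ψ_{i₂}|A|ψ_{i₃}⟩⋯⟨ψ_{i_m}|A|ψ_{i₁}⟩ is a nonnegative real number. -/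
/-!
Write `B a b = ⟨ψ a|A|ψ b⟩`. As a Gram matrix `Ψᴴ A Ψ` of a positive semidefinite `A`, `B` is
Hermitian with nonnegative diagonal. For a `2 × 2` such matrix, conjugating by the diagonal
unitary `diag(w, 1)` with `w * B 0 1 = |B 0 1|` makes every entry nonnegative, and such a
conjugation does not change cyclic products: the phases telescope around the cycle.
-/

open Matrix ComplexOrder

theorem Fintype.prod_comp_add_right {G M : Type*} [AddGroup G] [Fintype G] [CommMonoid M]
    (f : G → M) (g : G) : ∏ x, f (x + g) = ∏ x, f x :=
  Equiv.prod_comp (Equiv.addRight g) f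

theorem Complex.cyclic_prod_nonneg_of_phase_conj_nonneg {α : Type*} {m : ℕ} [NeZero m]
    (B : α → α → ℂ) (u : α → ℂ) (hu : ∀ a, star (u a) * u a = 1)
    (hB : ∀ a b, 0 ≤ u a * B a b * star (u b)) (i : Fin m → α) :
    0 ≤ ∏ j, B (i j) (i (j + 1)) := by
  set C : α → α → ℂ := fun a b => u a * B a b * star (u b)
  have hB_eq : ∀ a b, B a b = star (u a) * C a b * u b := fun a b => by
    linear_combination (-B a b) * hu a - B a b * star (u a) * u a * hu b
  have hcancel : (∏ j, star (u (i j))) * ∏ j, u (i (j + 1)) = 1 := by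
    rw [Fintype.prod_comp_add_right (fun j => u (i j)), ← Finset.prod_mul_distrib]
    exact Finset.prod_eq_one fun j _ => hu (i j)
  have hprod : ∏ j, B (i j) (i (j + 1)) = ∏ j, C (i j) (i (j + 1)) := calc
    _ = ∏ j, star (u (i j)) * C (i j) (i (j + 1)) * u (i (j + 1)) :=
        Finset.prod_congr rfl fun j _ => hB_eq _ _
    _ = ((∏ j, star (u (i j))) * ∏ j, u (i (j + 1))) * ∏ j, C (i j) (i (j + 1)) := by
        simp only [Finset.prod_mul_distrib]; ring
    _ = _ := by rw [hcancel, one_mul]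
  exact hprod ▸ Finset.prod_nonneg fun j _ => hB _ _

theorem Complex.exists_star_mul_self_eq_one_and_mul_eq_norm (z : ℂ) :
    ∃ w : ℂ, star w * w = 1 ∧ w * z = ‖z‖ := by
  refine ⟨exp (-z.arg * I), ?_, ?_⟩
  · rw [star_def, ← exp_conj, ← exp_add]
    simp
  · conv_lhs => rw [← norm_mul_exp_arg_mul_I z]
    rw [mul_left_comm, ← exp_add]
    simp

theorem Matrix.IsHermitian.exists_phase_conj_nonneg_fin_two {B : Matrix (Fin 2) (Fin 2) ℂ}
    (hB : B.IsHermitian) (hdiag : ∀ a, 0 ≤ B a a) :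
    ∃ u : Fin 2 → ℂ, (∀ a, star (u a) * u a = 1) ∧ ∀ a b, 0 ≤ u a * B a b * star (u b) := by
  obtain ⟨w, hw, hwB⟩ := Complex.exists_star_mul_self_eq_one_and_mul_eq_norm (B 0 1)
  have hB10 : B 1 0 = star (B 0 1) := (hB.apply 1 0).symm
  refine ⟨![w, 1], fun a => ?_, fun a b => ?_⟩
  · fin_cases a
    · exact hw
    · simp
  · fin_cases a <;> fin_cases b <;>
      simp only [Fin.zero_eta, Fin.mk_one, cons_val_zero, cons_val_one, star_one, one_mul, mul_one]
    · rw [show w * B 0 0 * star w = B 0 0 by linear_combination B 0 0 * hw]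
      exact hdiag 0
    · rw [hwB]
      exact_mod_cast norm_nonneg _
    · rw [hB10, mul_comm, ← star_mul', hwB, Complex.star_def, Complex.conj_ofReal]
      exact_mod_cast norm_nonneg _
    · exact hdiag 1

theorem Matrix.PosSemidef.cyclic_prod_nonneg_fin_two {m : ℕ} [NeZero m]
    {B : Matrix (Fin 2) (Fin 2) ℂ} (hB : B.PosSemidef) (i : Fin m → Fin 2) :
    0 ≤ ∏ j, B (i j) (i (j + 1)) := by
  obtain ⟨u, hu, huB⟩ := hB.isHermitian.exists_phase_conj_nonneg_fin_two fun _ => hB.diag_nonneg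
  exact Complex.cyclic_prod_nonneg_of_phase_conj_nonneg B u hu huB i

open Matrix ComplexOrder in
theorem cyclic_product_nonneg_general {m : ℕ} [NeZero m]
    (A : Matrix (Fin 2) (Fin 2) ℂ) (hA : A.PosSemidef)
    (ψ : Fin 2 → (Fin 2 → ℂ))
    (i : Fin m → Fin 2) :
    0 ≤ ∏ j : Fin m, (star (ψ (i j)) ⬝ᵥ A.mulVec (ψ (i (j + 1)))) := by
  have hG : ((of ψ)ᵀᴴ * A * (of ψ)ᵀ).PosSemidef := hA.conjTranspose_mul_mul_same _
  have hG_apply : ∀ a b, ((of ψ)ᵀᴴ * A * (of ψ)ᵀ) a b = star (ψ a) ⬝ᵥ A *ᵥ ψ b :=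
    fun a b => Matrix.mul_mul_apply _ _ _ a b
  simpa only [hG_apply] using hG.cyclic_prod_nonneg_fin_two i

open Matrix ComplexOrder in
theorem cyclic_product_nonneg {m : ℕ} [NeZero m]
    (A : Matrix (Fin 2) (Fin 2) ℂ) (hA : A.PosSemidef)
    (ψ : Fin 2 → (Fin 2 → ℂ))
    (hψ : ∀ a b, star (ψ a) ⬝ᵥ ψ b = if a = b then (1 : ℂ) else 0)
    (i : Fin m → Fin 2) :
    0 ≤ ∏ j : Fin m, (star (ψ (i j)) ⬝ᵥ A.mulVec (ψ (i (j + 1)))) :=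
  cyclic_product_nonneg_general A hA ψ i
end

section
/- For a positive semidefinite n×n matrix T, a Hermitian n×n matrix A, and α ∈ [0,1], Tr[T^{1/2} A T^{1/2} A] ≤ Tr[T^α A T^{1−α} A]. -/
open Matrix ComplexOrder

lemma scalar_amgm (α x y : ℝ) (hα1 : 0 ≤ α) (hα2 : α ≤ 1) (hx : 0 ≤ x) (hy : 0 ≤ y) :
    2 * (x ^ ((2:ℝ)⁻¹) * y ^ ((2:ℝ)⁻¹)) ≤ x ^ α * y ^ (1-α) + y ^ α * x ^ (1-α) := by
  have ha : 0 ≤ x ^ α * y ^ (1-α) := by positivity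
  have hb : 0 ≤ y ^ α * x ^ (1-α) := by positivity
  have hprod : (x ^ α * y ^ (1-α)) * (y ^ α * x ^ (1-α)) = x * y := by
    have h1 : x ^ α * x ^ (1-α) = x := by
      rw [← Real.rpow_add' hx (by norm_num)]; simp
    have h2 : y ^ α * y ^ (1-α) = y := by
      rw [← Real.rpow_add' hy (by norm_num)]; simp
    calc (x ^ α * y ^ (1-α)) * (y ^ α * x ^ (1-α))
        = (x ^ α * x ^ (1-α)) * (y ^ α * y ^ (1-α)) := by ring
      _ = x * y := by rw [h1, h2]
  have hsq : Real.sqrt (x ^ α * y ^ (1-α)) * Real.sqrt (y ^ α * x ^ (1-α))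
      = x ^ ((2:ℝ)⁻¹) * y ^ ((2:ℝ)⁻¹) := by
    rw [← Real.sqrt_mul ha, hprod, Real.sqrt_mul hx,
      Real.sqrt_eq_rpow, Real.sqrt_eq_rpow]
    norm_num
  nlinarith [sq_nonneg (Real.sqrt (x ^ α * y ^ (1-α)) - Real.sqrt (y ^ α * x ^ (1-α))),
    Real.sq_sqrt ha, Real.sq_sqrt hb]

open Matrix ComplexOrder in
theorem trace_sqrtA_sqrtA_le_fracPow {n : ℕ} (α : ℝ) (hα : α ∈ Set.Icc (0 : ℝ) 1)
    (T A : Matrix (Fin n) (Fin n) ℂ) (hT : T.PosSemidef) (hA : A.IsHermitian) :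
    trace (hT.1.cfc (fun x : ℝ => x ^ ((2 : ℝ)⁻¹)) * A *
        hT.1.cfc (fun x : ℝ => x ^ ((2 : ℝ)⁻¹)) * A) ≤
      trace (hT.1.cfc (fun x : ℝ => x ^ α) * A * hT.1.cfc (fun x : ℝ => x ^ (1 - α)) * A) := by
  obtain ⟨hα1, hα2⟩ := hα
  set U : Matrix (Fin n) (Fin n) ℂ := (hT.1.eigenvectorUnitary : Matrix (Fin n) (Fin n) ℂ) with hU
  set B : Matrix (Fin n) (Fin n) ℂ := star U * A * U with hB
  have hBh : B.IsHermitian := by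
    have := isHermitian_mul_mul_conjTranspose (star U) hA
    simpa [hB, star_eq_conjTranspose] using this
  set lam : Fin n → ℝ := hT.1.eigenvalues with hlam
  have hlamnn : ∀ i, 0 ≤ lam i := fun i => hT.eigenvalues_nonneg i
  set w : Fin n → Fin n → ℝ := fun i j => Complex.normSq (B i j) with hw
  have hwnn : ∀ i j, 0 ≤ w i j := fun i j => Complex.normSq_nonneg _
  have hwsymm : ∀ i j, w j i = w i j := by
    intro i j
    rw [hw]
    simp only
    rw [← hBh.apply j i]
    exact Complex.normSq_conj _
  -- trace formula
  have key : ∀ f g : ℝ → ℝ, trace (hT.1.cfc f * A * hT.1.cfc g * A)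
      = ((∑ i, ∑ j, f (lam i) * g (lam j) * w i j : ℝ) : ℂ) := by
    intro f g
    set Df : Matrix (Fin n) (Fin n) ℂ := diagonal (Complex.ofReal ∘ f ∘ lam) with hDf
    set Dg : Matrix (Fin n) (Fin n) ℂ := diagonal (Complex.ofReal ∘ g ∘ lam) with hDg
    have hcfc : hT.1.cfc f = U * Df * star U ∧ hT.1.cfc g = U * Dg * star U := by
      constructor <;> rfl
    rw [hcfc.1, hcfc.2]
    have e1 : (U * Df * star U) * A * (U * Dg * star U) * A
        = U * (Df * (star U * A * U) * (Dg * (star U * A)) ) := by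
      simp only [Matrix.mul_assoc]
    rw [e1, trace_mul_comm]
    have e2 : (Df * (star U * A * U) * (Dg * (star U * A))) * U = Df * B * (Dg * B) := by
      simp only [hB, Matrix.mul_assoc]
    rw [e2]
    rw [Matrix.trace]
    simp only [diag_apply, Matrix.mul_apply, hDf, hDg, diagonal_apply, Function.comp]
    push_cast
    rw [Finset.sum_congr rfl]
    intro i _
    rw [Finset.sum_congr rfl]
    intro j _
    simp only [ite_mul, zero_mul, Finset.sum_ite_eq, Finset.mem_univ, if_true]
    have hji : B j i = star (B i j) := by rw [← hBh.apply i j, star_star]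
    have hnorm : (B i j) * star (B i j) = ((w i j : ℝ) : ℂ) := by
      simp [hw, Complex.star_def, Complex.mul_conj]
    rw [hji]
    linear_combination ((f (lam i)) * (g (lam j)) : ℂ) * hnorm
  rw [key, key, Complex.real_le_real]
  -- swap symmetry
  have hswap : ∑ i, ∑ j, lam j ^ α * lam i ^ (1 - α) * w i j
      = ∑ i, ∑ j, lam i ^ α * lam j ^ (1 - α) * w i j := by
    rw [Finset.sum_comm]
    exact Finset.sum_congr rfl fun i _ => Finset.sum_congr rfl fun j _ => by rw [hwsymm]
  have hpt : ∀ i j : Fin n, 2 * (lam i ^ ((2:ℝ)⁻¹) * lam j ^ ((2:ℝ)⁻¹)) * w i j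
      ≤ (lam i ^ α * lam j ^ (1 - α) + lam j ^ α * lam i ^ (1 - α)) * w i j := fun i j =>
    mul_le_mul_of_nonneg_right (scalar_amgm α _ _ hα1 hα2 (hlamnn i) (hlamnn j)) (hwnn i j)
  have hsum : ∑ i, ∑ j, 2 * (lam i ^ ((2:ℝ)⁻¹) * lam j ^ ((2:ℝ)⁻¹)) * w i j
      ≤ ∑ i, ∑ j, (lam i ^ α * lam j ^ (1 - α) + lam j ^ α * lam i ^ (1 - α)) * w i j :=
    Finset.sum_le_sum fun i _ => Finset.sum_le_sum fun j _ => hpt i j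
  have e3 : ∑ i, ∑ j, 2 * (lam i ^ ((2:ℝ)⁻¹) * lam j ^ ((2:ℝ)⁻¹)) * w i j
      = 2 * ∑ i, ∑ j, lam i ^ ((2:ℝ)⁻¹) * lam j ^ ((2:ℝ)⁻¹) * w i j := by
    rw [Finset.mul_sum]
    exact Finset.sum_congr rfl fun i _ => by rw [Finset.mul_sum]; exact Finset.sum_congr rfl fun j _ => by ring
  have e4 : ∑ i, ∑ j, (lam i ^ α * lam j ^ (1 - α) + lam j ^ α * lam i ^ (1 - α)) * w i j
      = (∑ i, ∑ j, lam i ^ α * lam j ^ (1 - α) * w i j)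
        + ∑ i, ∑ j, lam j ^ α * lam i ^ (1 - α) * w i j := by
    rw [← Finset.sum_add_distrib]
    exact Finset.sum_congr rfl fun i _ => by
      rw [← Finset.sum_add_distrib]
      exact Finset.sum_congr rfl fun j _ => by ring
  rw [e3, e4, hswap] at hsum
  linarith
end
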